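/- (Hörmander condition) Let 𝔤 be the smallest ℝ-linear subspace of the space of smooth vector fields on ℝ^N that contains D_0, D_1, …, D_n and is closed under the Lie bracket operation. Then for every φ ∈ ℝ^N, the set of vectors {W(φ) : W ∈ 𝔤} spans all of ℝ^N. -/

import Mathlib

open scoped BigOperators

noncomputable section

/-- Vector fields on `ℝ^N`. -/
abbrev VF (N : ℕ) := (Fin N → ℝ) → Fin N → ℝ

/-- The Lie bracket `[V,W](φ) = DW(φ)(V(φ)) − DV(φ)(W(φ))` of vector fields. -/
def lieBracket {N : ℕ} (V W : VF N) : VF N :=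
  fun φ => fderiv ℝ W φ (V φ) - fderiv ℝ V φ (W φ)

/-- The drift vector field `D₀`. -/
def Dfield0 {N : ℕ} (lam μ : ℝ) (k : ℕ) : VF N :=
  fun φ i => (lam - (k : ℝ) * μ ^ 2 / 2) * φ i + lam

/-- The diffusion vector fields `D_j`, `1 ≤ j ≤ n`. -/
def DfieldJ {n N : ℕ} (μ : ℝ) (S : Fin N → Finset (Fin n)) (j : Fin n) : VF N :=
  fun φ i => (μ / Real.sqrt 2) * (φ i * if j ∈ S i then 1 else 0)

/-
`[D₀, D_j]` is the constant field `c λ 1_{j ∈ S_i}` (with `c = μ/√2`), because the linear part of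
`D₀` is a multiple of the identity and commutes with the diagonal field `D_j`; and bracketing a
constant field `w` with `D_j` multiplies `w` coordinatewise by `c 1_{j ∈ S_i}`. Iterating over
`j ∈ S_{i₀}` gives the constant field `c^k λ 1_{S_{i₀} ⊆ S_i}`. Distinct `k`-sets are never nested,
so this is a nonzero multiple of the `i₀`-th coordinate vector.
-/

theorem Submodule.eq_top_of_smul_single_mem {K ι : Type*} [Field K] [Finite ι]
    [DecidableEq ι] {p : Submodule K (ι → K)} {c : K} (hc : c ≠ 0)
    (h : ∀ i, c • Pi.single i 1 ∈ p) : p = ⊤ := by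
  rw [eq_top_iff, ← (Pi.basisFun K ι).span_eq, Submodule.span_le]
  rintro _ ⟨i, rfl⟩
  simpa [hc] using p.smul_mem c⁻¹ (h i)

theorem Finset.subset_iff_eq_of_card_eq {α ι : Type*} {S : ι → Finset α}
    (hS : Function.Injective S) {k : ℕ} (hcard : ∀ i, (S i).card = k) {i j : ι} :
    S i ⊆ S j ↔ j = i :=
  ⟨fun h => hS (Finset.eq_of_subset_of_card_le h (by rw [hcard, hcard])).symm,
    fun h => h ▸ subset_rfl⟩

section BracketClosed

variable {N : ℕ}

theorem lieBracket_affine_mul (a : ℝ) (b d : Fin N → ℝ) :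
    lieBracket (fun φ => a • φ + b) (fun φ => d * φ) = fun _ => d * b := by
  funext φ
  have hA : HasFDerivAt (fun φ : Fin N → ℝ => a • φ + b) (a • ContinuousLinearMap.id ℝ _) φ :=
    ((hasFDerivAt_id φ).const_smul a).add_const b
  rw [lieBracket, hA.fderiv, fderiv_const_mul differentiableAt_id]
  simp [mul_add]

theorem lieBracket_const_mul (w d : Fin N → ℝ) :
    lieBracket (fun _ => w) (fun φ => d * φ) = fun _ => d * w := by
  simpa using lieBracket_affine_mul 0 w d

theorem const_prod_mul_mem {G : Set (VF N)} (hbr : ∀ V ∈ G, ∀ W ∈ G, lieBracket V W ∈ G)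
    {a : ℝ} {b : Fin N → ℝ} (hA : (fun φ => a • φ + b) ∈ G) {ι : Type*}
    {d : ι → Fin N → ℝ} (hD : ∀ j, (fun φ => d j * φ) ∈ G) {T : Finset ι}
    (hT : T.Nonempty) : (fun _ => (∏ j ∈ T, d j) * b) ∈ G := by
  induction hT using Finset.Nonempty.cons_induction with
  | singleton j => simpa [lieBracket_affine_mul] using hbr _ hA _ (hD j)
  | cons j T _ _ ih =>
    simpa [lieBracket_const_mul, mul_assoc] using hbr _ ih _ (hD j)

end BracketClosed

theorem dfield0_eq_affine {N : ℕ} (lam μ : ℝ) (k : ℕ) :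
    (Dfield0 lam μ k : VF N) = fun φ => (lam - (k : ℝ) * μ ^ 2 / 2) • φ + fun _ => lam :=
  rfl

theorem dfieldJ_eq_mul {n N : ℕ} (μ : ℝ) (S : Fin N → Finset (Fin n)) (j : Fin n) :
    DfieldJ μ S j = fun φ => (fun i => μ / Real.sqrt 2 * if j ∈ S i then 1 else 0) * φ := by
  funext φ i
  simp only [DfieldJ, Pi.mul_apply]
  ring

theorem prod_mul_boole_mem {α ι R : Type*} [DecidableEq α] [CommSemiring R] (c : R)
    (S : ι → Finset α) (T : Finset α) :
    ∏ j ∈ T, (fun i => c * if j ∈ S i then 1 else 0) =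
      fun i => c ^ T.card * if T ⊆ S i then 1 else 0 := by
  funext i
  simp only [Finset.prod_apply, Finset.prod_mul_distrib, Finset.prod_const, Finset.prod_boole]
  rfl

theorem smul_single_mem_of_lieBracket_mem {n k N : ℕ} (hk : 1 ≤ k)
    {S : Fin N → Finset (Fin n)} (hS : Function.Injective S) (hScard : ∀ i, (S i).card = k)
    (μ lam : ℝ) {G : Set (VF N)} (h0 : Dfield0 lam μ k ∈ G) (hD : ∀ j, DfieldJ μ S j ∈ G)
    (hbr : ∀ V ∈ G, ∀ W ∈ G, lieBracket V W ∈ G) (i₀ : Fin N) :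
    (fun _ => ((μ / Real.sqrt 2) ^ k * lam) • Pi.single i₀ 1) ∈ G := by
  have hne : (S i₀).Nonempty := Finset.card_pos.mp (by rw [hScard]; omega)
  rw [dfield0_eq_affine] at h0
  simp only [dfieldJ_eq_mul] at hD
  convert const_prod_mul_mem hbr h0 hD hne using 2
  rw [prod_mul_boole_mem]
  ext i
  simp only [Finset.subset_iff_eq_of_card_eq hS hScard, hScard, Pi.mul_apply, Pi.smul_apply,
    Pi.single_apply, smul_eq_mul]
  split_ifs <;> ring

theorem hormander_condition_general
    (n k N : ℕ) (hk : 1 ≤ k) (S : Fin N → Finset (Fin n)) (hSinj : Function.Injective S)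
    (hScard : ∀ i, (S i).card = k)
    (μ lam : ℝ) (hμ : μ ≠ 0) (hlam : 0 < lam) :
    ∀ φ : Fin N → ℝ,
      Submodule.span ℝ ((fun W : VF N => W φ) ''
        (⋂₀ {G : Set (VF N) |
          (∀ W ∈ G, ContDiff ℝ (⊤ : ℕ∞) W) ∧
          Dfield0 lam μ k ∈ G ∧ (∀ j : Fin n, DfieldJ μ S j ∈ G) ∧
          (∀ V ∈ G, ∀ W ∈ G, V + W ∈ G) ∧
          (∀ (a : ℝ), ∀ V ∈ G, a • V ∈ G) ∧
          (∀ V ∈ G, ∀ W ∈ G, lieBracket V W ∈ G)})) = ⊤ := by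
  intro φ
  have hc : (μ / Real.sqrt 2) ^ k * lam ≠ 0 := by positivity
  refine Submodule.eq_top_of_smul_single_mem hc fun i₀ =>
    Submodule.subset_span ⟨fun _ => _, ?_, rfl⟩
  rintro G ⟨-, h0, hD, -, -, hbr⟩
  exact smul_single_mem_of_lieBracket_mem hk hSinj hScard μ lam h0 hD hbr i₀

theorem hormander_condition
    (n k N : ℕ) (hk : 1 ≤ k) (hkn : k < n) (hN : N = n.choose k)
    (S : Fin N → Finset (Fin n)) (hSinj : Function.Injective S)
    (hScard : ∀ i, (S i).card = k)
    (μ lam : ℝ) (hμ : μ ≠ 0) (hlam : 0 < lam) :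
    ∀ φ : Fin N → ℝ,
      Submodule.span ℝ ((fun W : VF N => W φ) ''
        (⋂₀ {G : Set (VF N) |
          (∀ W ∈ G, ContDiff ℝ (⊤ : ℕ∞) W) ∧
          Dfield0 lam μ k ∈ G ∧ (∀ j : Fin n, DfieldJ μ S j ∈ G) ∧
          (∀ V ∈ G, ∀ W ∈ G, V + W ∈ G) ∧
          (∀ (a : ℝ), ∀ V ∈ G, a • V ∈ G) ∧
          (∀ V ∈ G, ∀ W ∈ G, lieBracket V W ∈ G)})) = ⊤ :=
  hormander_condition_general n k N hk S hSinj hScard μ lam hμ hlam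

end
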